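/- Let ε > 0, V a finite nonempty set with the uniform measure, and f : V × V → [0,∞) a symmetric function. Then there exists a partition 𝒫 of V into at most 2^{32·E[f]/ε²} parts such that ‖(f − f_𝒫)·1_{f_𝒫 ≤ 1}‖_□ ≤ ε. -/

import Mathlib

open Finset

/-- The stepping `f_𝒫` of `f : V × V → ℝ` with respect to a partition `𝒫` of `V`: on each
block `A × B` it is the average of `f` over `A × B`. -/
noncomputable def stepFn {V : Type*} [DecidableEq V] [Fintype V]
    (P : Finpartition (Finset.univ : Finset V)) (f : V → V → ℝ) (x y : V) : ℝ :=
  (∑ a ∈ P.part x, ∑ b ∈ P.part y, f a b) / (((P.part x).card : ℝ) * ((P.part y).card : ℝ))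

/-- The cut norm of `g : V × V → ℝ`: the supremum over subsets `A, B ⊆ V` of
`|E[g(x,y)1_A(x)1_B(y)]|`, with uniform independent `x, y ∈ V`. -/
noncomputable def cutNorm {V : Type*} [Fintype V] (g : V → V → ℝ) : ℝ :=
  ⨆ p : Finset V × Finset V,
    |(∑ x ∈ p.1, ∑ y ∈ p.2, g x y) / ((Fintype.card V : ℝ)) ^ 2|

/-!
Energy increment with the truncated quadratic potential `φ(t) = t²` for `t ≤ 3` and
`φ(t) = 6t - 9` beyond. Since `φ(t) ≤ 6t`, the energy `∑ φ(f_𝒫)` of any partition is at most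
`6 ∑ f`, a bound that depends only on the density of `f`. Refining `𝒫` to `𝒬` raises the
energy by `∑ D_φ(f_𝒬, f_𝒫) ≥ 0`, the Bregman divergences of the convex `φ`: the first-order term
`∑ φ'(f_𝒫)(f_𝒬 - f_𝒫)` vanishes because `φ'(f_𝒫)` is constant on the blocks of `𝒫`. If sets `A, B` witness that
`(f - f_𝒫)·1_{f_𝒫 ≤ 1}` has cut norm more than `ε ≤ 1`, then refining `𝒫` by `A` and `B`
multiplies the number of parts by at most `4` and raises the energy by at least `ε²|V|²/2`:
where the refined density exceeds `3` the linear part of `φ` pays for the deviation, elsewhere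
Cauchy–Schwarz does. Hence at most `12 E[f]/ε²` refinements occur. For `ε ≥ 1` there is nothing
to do: the cut norm of `(f - f_𝒫)·1_{f_𝒫 ≤ 1}` is at most `1` for every partition.
-/

namespace SparseRegularity

noncomputable def phi (t : ℝ) : ℝ := if t ≤ 3 then t ^ 2 else 6 * t - 9

noncomputable def phiDeriv (t : ℝ) : ℝ := if t ≤ 3 then 2 * t else 6

noncomputable def bregman (s t : ℝ) : ℝ := phi s - phi t - phiDeriv t * (s - t)

lemma phi_nonneg (t : ℝ) : 0 ≤ phi t := by
  unfold phi; split_ifs <;> nlinarith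

lemma phi_le_six_mul {t : ℝ} (ht : 0 ≤ t) : phi t ≤ 6 * t := by
  unfold phi; split_ifs <;> nlinarith

lemma bregman_nonneg (s t : ℝ) : 0 ≤ bregman s t := by
  unfold bregman phi phiDeriv
  split_ifs <;> nlinarith [sq_nonneg (s - t), sq_nonneg (s - 3), sq_nonneg (t - 3)]

lemma bregman_eq_sq {s t : ℝ} (hs : s ≤ 3) (ht : t ≤ 3) : bregman s t = (s - t) ^ 2 := by
  simp only [bregman, phi, phiDeriv, if_pos hs, if_pos ht]
  ring

lemma two_mul_sub_le_bregman {s t : ℝ} (hs : 3 < s) (ht : t ≤ 1) :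
    2 * (s - t) ≤ bregman s t := by
  have ht₃ : t ≤ 3 := by linarith
  simp only [bregman, phi, phiDeriv, if_neg hs.not_ge, if_pos ht₃]
  nlinarith

lemma sq_mul_card_div_two_le_sum_bregman {ι : Type*} [Fintype ι] (s t : ι → ℝ) (S : Finset ι)
    (ht : ∀ i ∈ S, t i ≤ 1) {ε : ℝ} (hε₀ : 0 ≤ ε) (hε₁ : ε ≤ 1)
    (hdev : ε * Fintype.card ι < |∑ i ∈ S, (s i - t i)|) :
    ε ^ 2 * Fintype.card ι / 2 ≤ ∑ i, bregman (s i) (t i) := by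
  set n : ℝ := (Fintype.card ι : ℝ)
  set S₁ := S.filter (fun i => s i ≤ 3)
  set S₂ := S.filter (fun i => ¬ s i ≤ 3)
  set a := ∑ i ∈ S₁, (s i - t i)
  set b := ∑ i ∈ S₂, (s i - t i)
  set X := ∑ i ∈ S₁, (s i - t i) ^ 2
  have hsplit : ∑ i ∈ S, (s i - t i) = a + b := (sum_filter_add_sum_filter_not _ _ _).symm
  have hb : 0 ≤ b := sum_nonneg fun i hi => by
    obtain ⟨hiS, hi⟩ := mem_filter.1 hi
    linarith [ht i hiS, not_le.1 hi]
  have hX₀ : 0 ≤ X := sum_nonneg fun i _ => sq_nonneg _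
  have hcauchy : a ^ 2 ≤ n * X :=
    sq_sum_le_card_mul_sum_sq.trans
      (mul_le_mul_of_nonneg_right (Nat.cast_le.2 (card_le_univ S₁)) hX₀)
  have hgain : X + 2 * b ≤ ∑ i, bregman (s i) (t i) := by
    calc X + 2 * b ≤ ∑ i ∈ S₁, bregman (s i) (t i) + ∑ i ∈ S₂, bregman (s i) (t i) := by
          gcongr ?_ + ?_
          · refine (sum_congr rfl fun i hi => ?_).le
            obtain ⟨hiS, hi⟩ := mem_filter.1 hi
            exact (bregman_eq_sq hi ((ht i hiS).trans (by norm_num))).symm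
          · rw [mul_sum]
            refine sum_le_sum fun i hi => ?_
            obtain ⟨hiS, hi⟩ := mem_filter.1 hi
            exact two_mul_sub_le_bregman (not_le.1 hi) (ht i hiS)
      _ = ∑ i ∈ S, bregman (s i) (t i) := sum_filter_add_sum_filter_not _ _ _
      _ ≤ ∑ i, bregman (s i) (t i) := sum_le_univ_sum_of_nonneg fun i => bregman_nonneg _ _
  rw [hsplit] at hdev
  have hn : 0 ≤ n := Nat.cast_nonneg _
  -- Either the cells with `s > 3` carry a quarter of the deviation, or those with `s ≤ 3` carry
  -- three quarters of it.
  rcases le_or_gt (ε * n / 4) b with hb' | hb'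
  · nlinarith [mul_nonneg (mul_nonneg hε₀ (sub_nonneg.2 hε₁)) hn]
  · have ha : 3 * (ε * n) / 4 < |a| := by
      have := abs_add_le a b
      rw [abs_of_nonneg hb] at this
      linarith
    have ha2 : (3 * (ε * n) / 4) ^ 2 < a ^ 2 := by
      rw [← sq_abs a]
      exact pow_lt_pow_left₀ ha (by positivity) two_ne_zero
    nlinarith

lemma exists_of_energy_increment {α : Type*} {good : α → Prop} {E : α → ℝ} {c : α → ℕ}
    {M g : ℝ} {m : ℕ} (hm : 1 ≤ m) (hE : ∀ a, E a ≤ M)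
    (hstep : ∀ a, ¬ good a → ∃ b, c b ≤ m * c a ∧ E a + g ≤ E b) (k : ℕ) (a : α)
    (hk : M - E a < (k + 1) * g) : ∃ b, c b ≤ m ^ k * c a ∧ good b := by
  induction k generalizing a with
  | zero =>
    by_cases ha : good a
    · exact ⟨a, by simp, ha⟩
    · obtain ⟨b, -, hb⟩ := hstep a ha
      linarith [hE b, show M - E a < g by simpa using hk]
  | succ k ih =>
    by_cases ha : good a
    · exact ⟨a, Nat.le_mul_of_pos_left _ (Nat.pow_pos hm), ha⟩
    · obtain ⟨b, hcb, hb⟩ := hstep a ha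
      obtain ⟨b', hcb', hb'⟩ := ih b (by push_cast at hk; linarith)
      exact ⟨b', hcb'.trans (by rw [pow_succ, mul_assoc]; exact Nat.mul_le_mul_left _ hcb), hb'⟩

lemma four_pow_floor_le_two_rpow {c : ℝ} (hc : 0 ≤ c) : (4 : ℝ) ^ ⌊c⌋₊ ≤ 2 ^ (2 * c) := by
  calc (4 : ℝ) ^ ⌊c⌋₊ = 2 ^ ((2 * ⌊c⌋₊ : ℕ) : ℝ) := by
        rw [Real.rpow_natCast, pow_mul]
        norm_num
    _ ≤ 2 ^ (2 * c) :=
        Real.rpow_le_rpow_of_exponent_le one_le_two (by push_cast; linarith [Nat.floor_le hc])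

lemma sum_sum_le_sum_sum_univ {α β : Type*} [Fintype α] [Fintype β] {F : α → β → ℝ}
    (hF : ∀ x y, 0 ≤ F x y) (A : Finset α) (B : Finset β) :
    ∑ x ∈ A, ∑ y ∈ B, F x y ≤ ∑ x, ∑ y, F x y :=
  (sum_le_sum fun x _ => sum_le_univ_sum_of_nonneg (hF x)).trans
    (sum_le_univ_sum_of_nonneg fun x => sum_nonneg fun y _ => hF x y)

lemma cutNorm_le_iff {V : Type*} [Fintype V] [Nonempty V] {g : V → V → ℝ} {ε : ℝ} :
    cutNorm g ≤ ε ↔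
      ∀ A B : Finset V, |∑ x ∈ A, ∑ y ∈ B, g x y| ≤ ε * (Fintype.card V : ℝ) ^ 2 := by
  have hn : (0 : ℝ) < (Fintype.card V : ℝ) ^ 2 := by positivity
  rw [cutNorm, ciSup_le_iff (Set.finite_range _).bddAbove, Prod.forall]
  simp_rw [abs_div, abs_of_pos hn, div_le_iff₀ hn]

lemma card_parts_inf_le {α : Type*} [DistribLattice α] [OrderBot α] [DecidableEq α] {a : α}
    (P R : Finpartition a) : #(P ⊓ R).parts ≤ #P.parts * #R.parts := by
  rw [Finpartition.parts_inf, ← card_product]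
  exact card_erase_le.trans card_image_le

section Partition

variable {V : Type*} [DecidableEq V] [Fintype V] {P Q : Finpartition (univ : Finset V)}

lemma mem_part_iff {a b : V} : a ∈ P.part b ↔ P.part a = P.part b :=
  P.mem_part_iff_part_eq_part (mem_univ a) (mem_univ b)

lemma card_part_pos (P : Finpartition (univ : Finset V)) (x : V) : 0 < #(P.part x) :=
  card_pos.2 ⟨x, P.mem_part (mem_univ x)⟩

lemma part_eq_part_of_le (hQP : Q ≤ P) {x x' : V} (h : Q.part x = Q.part x') :
    P.part x = P.part x' := by
  obtain ⟨c, hc, hQc⟩ := hQP (Q.part_mem.2 (mem_univ x))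
  have hx' : x' ∈ Q.part x := h ▸ Q.mem_part (mem_univ x')
  rw [P.part_eq_of_mem hc (hQc (Q.mem_part (mem_univ x))), P.part_eq_of_mem hc (hQc hx')]

lemma mem_iff_mem_of_le_atomise {F : Finset (Finset V)} (hQ : Q ≤ Finpartition.atomise univ F)
    {t : Finset V} (ht : t ∈ F) {x x' : V} (h : Q.part x = Q.part x') : x ∈ t ↔ x' ∈ t := by
  set R := Finpartition.atomise univ F
  have hx : x ∈ R.part x := R.mem_part (mem_univ x)
  have hx' : x' ∈ R.part x := part_eq_part_of_le hQ h ▸ R.mem_part (mem_univ x')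
  obtain ⟨-, G, -, hG⟩ := Finpartition.mem_atomise.1 (R.part_mem.2 (mem_univ x))
  simp only [← hG, mem_filter, mem_univ, true_and] at hx hx'
  rw [← hx t ht, hx' t ht]

lemma sum_sum_part_div_card (P : Finpartition (univ : Finset V)) (g : V → ℝ) :
    ∑ x, (∑ a ∈ P.part x, g a) / #(P.part x) = ∑ a, g a := by
  simp_rw [sum_div]
  rw [sum_comm' (t' := univ) (s' := fun a => P.part a) fun x a => by
    simp only [mem_univ, true_and, and_true, mem_part_iff, eq_comm]]
  refine sum_congr rfl fun a _ => ?_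
  rw [sum_congr rfl fun x hx => by rw [mem_part_iff.1 hx], sum_const, nsmul_eq_mul,
    mul_div_cancel₀ _ (Nat.cast_ne_zero.2 (card_part_pos P a).ne')]

lemma sum_stepFn (P : Finpartition (univ : Finset V)) (f : V → V → ℝ) :
    ∑ x, ∑ y, stepFn P f x y = ∑ x, ∑ y, f x y := by
  calc ∑ x, ∑ y, stepFn P f x y
      = ∑ x, (∑ a ∈ P.part x, ∑ y, (∑ b ∈ P.part y, f a b) / #(P.part y)) / #(P.part x) := by
        refine sum_congr rfl fun x _ => ?_
        rw [sum_comm, sum_div]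
        refine sum_congr rfl fun y _ => ?_
        rw [stepFn, ← sum_div, div_div, mul_comm]
    _ = ∑ x, (∑ a ∈ P.part x, ∑ b, f a b) / #(P.part x) := by simp_rw [sum_sum_part_div_card]
    _ = ∑ x, ∑ y, f x y := sum_sum_part_div_card P _

lemma stepFn_nonneg (P : Finpartition (univ : Finset V)) {f : V → V → ℝ}
    (hf : ∀ x y, 0 ≤ f x y) (x y : V) : 0 ≤ stepFn P f x y :=
  div_nonneg (sum_nonneg fun a _ => sum_nonneg fun b _ => hf a b) (by positivity)

def BlockConst (P : Finpartition (univ : Finset V)) (h : V → V → ℝ) : Prop :=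
  ∀ ⦃x x' y y'⦄, P.part x = P.part x' → P.part y = P.part y' → h x y = h x' y'

lemma blockConst_stepFn (P : Finpartition (univ : Finset V)) (f : V → V → ℝ) :
    BlockConst P (stepFn P f) := fun x x' y y' hx hy => by
  rw [stepFn, stepFn, hx, hy]

lemma BlockConst.mono {h : V → V → ℝ} (hh : BlockConst P h) (hQP : Q ≤ P) : BlockConst Q h :=
  fun _ _ _ _ hx hy => hh (part_eq_part_of_le hQP hx) (part_eq_part_of_le hQP hy)

lemma stepFn_mul_of_blockConst {h : V → V → ℝ} (hh : BlockConst P h) (f : V → V → ℝ)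
    (x y : V) : stepFn P f x y * h x y = stepFn P (fun a b => f a b * h a b) x y := by
  rw [stepFn, stepFn, div_mul_eq_mul_div, sum_mul]
  congr 1
  refine sum_congr rfl fun a ha => ?_
  rw [sum_mul]
  refine sum_congr rfl fun b hb => ?_
  rw [hh (mem_part_iff.1 ha).symm (mem_part_iff.1 hb).symm]

lemma sum_stepFn_mul_of_blockConst {h : V → V → ℝ} (hh : BlockConst P h) (f : V → V → ℝ) :
    ∑ x, ∑ y, stepFn P f x y * h x y = ∑ x, ∑ y, f x y * h x y := by
  simp_rw [stepFn_mul_of_blockConst hh]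
  exact sum_stepFn P _

noncomputable def energy (P : Finpartition (univ : Finset V)) (f : V → V → ℝ) : ℝ :=
  ∑ x, ∑ y, phi (stepFn P f x y)

lemma energy_nonneg (P : Finpartition (univ : Finset V)) (f : V → V → ℝ) : 0 ≤ energy P f :=
  sum_nonneg fun _ _ => sum_nonneg fun _ _ => phi_nonneg _

lemma energy_le (P : Finpartition (univ : Finset V)) {f : V → V → ℝ} (hf : ∀ x y, 0 ≤ f x y) :
    energy P f ≤ 6 * ∑ x, ∑ y, f x y := by
  calc energy P f ≤ ∑ x, ∑ y, 6 * stepFn P f x y :=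
        sum_le_sum fun x _ => sum_le_sum fun y _ => phi_le_six_mul (stepFn_nonneg P hf x y)
    _ = 6 * ∑ x, ∑ y, f x y := by simp_rw [← mul_sum, sum_stepFn]

lemma energy_sub_energy_of_le (hQP : Q ≤ P) (f : V → V → ℝ) :
    energy Q f - energy P f = ∑ x, ∑ y, bregman (stepFn Q f x y) (stepFn P f x y) := by
  have hderiv : BlockConst P fun x y => phiDeriv (stepFn P f x y) :=
    fun _ _ _ _ hx hy => congrArg phiDeriv (blockConst_stepFn P f hx hy)
  have hlinear :
      ∑ x, ∑ y, phiDeriv (stepFn P f x y) * (stepFn Q f x y - stepFn P f x y) = 0 := by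
    simp_rw [mul_sub, sum_sub_distrib, mul_comm (phiDeriv _)]
    rw [sum_stepFn_mul_of_blockConst (hderiv.mono hQP), sum_stepFn_mul_of_blockConst hderiv,
      sub_self]
  simp only [energy, bregman, sum_sub_distrib, hlinear, sub_zero]

noncomputable def truncatedError (P : Finpartition (univ : Finset V)) (f : V → V → ℝ)
    (x y : V) : ℝ :=
  (f x y - stepFn P f x y) * (if stepFn P f x y ≤ 1 then 1 else 0)

lemma abs_sum_truncatedError_le (P : Finpartition (univ : Finset V)) {f : V → V → ℝ}
    (hf : ∀ x y, 0 ≤ f x y) (A B : Finset V) :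
    |∑ x ∈ A, ∑ y ∈ B, truncatedError P f x y| ≤ (Fintype.card V : ℝ) ^ 2 := by
  set ind : V → V → ℝ := fun x y => if stepFn P f x y ≤ 1 then 1 else 0
  have hind : BlockConst P ind := fun _ _ _ _ hx hy => by
    simp only [ind, blockConst_stepFn P f hx hy]
  have hind₀ : ∀ x y, 0 ≤ ind x y := fun x y => by
    simp only [ind]
    split_ifs <;> norm_num
  have hv : ∀ x y, 0 ≤ stepFn P f x y * ind x y ∧ stepFn P f x y * ind x y ≤ 1 := fun x y => by
    have := stepFn_nonneg P hf x y
    simp only [ind]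
    split_ifs <;> constructor <;> linarith
  have hsplit : ∀ x y, truncatedError P f x y = f x y * ind x y - stepFn P f x y * ind x y :=
    fun x y => sub_mul _ _ _
  have hmass : ∑ x, ∑ y, stepFn P f x y * ind x y ≤ (Fintype.card V : ℝ) ^ 2 := by
    calc ∑ x, ∑ y, stepFn P f x y * ind x y ≤ ∑ _x : V, ∑ _y : V, (1 : ℝ) :=
          sum_le_sum fun x _ => sum_le_sum fun y _ => (hv x y).2
      _ = (Fintype.card V : ℝ) ^ 2 := by simp [sq]
  rw [abs_le]
  constructor
  · calc -(Fintype.card V : ℝ) ^ 2 ≤ -∑ x ∈ A, ∑ y ∈ B, stepFn P f x y * ind x y :=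
          neg_le_neg ((sum_sum_le_sum_sum_univ (fun x y => (hv x y).1) A B).trans hmass)
      _ ≤ ∑ x ∈ A, ∑ y ∈ B, truncatedError P f x y := by
          simp_rw [← sum_neg_distrib]
          exact sum_le_sum fun x _ => sum_le_sum fun y _ => by
            rw [hsplit]
            linarith [mul_nonneg (hf x y) (hind₀ x y)]
  · calc ∑ x ∈ A, ∑ y ∈ B, truncatedError P f x y ≤ ∑ x ∈ A, ∑ y ∈ B, f x y * ind x y :=
          sum_le_sum fun x _ => sum_le_sum fun y _ => by rw [hsplit]; linarith [(hv x y).1]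
      _ ≤ ∑ x, ∑ y, f x y * ind x y :=
          sum_sum_le_sum_sum_univ (fun x y => mul_nonneg (hf x y) (hind₀ x y)) A B
      _ = ∑ x, ∑ y, stepFn P f x y * ind x y := (sum_stepFn_mul_of_blockConst hind f).symm
      _ ≤ (Fintype.card V : ℝ) ^ 2 := hmass

lemma cutNorm_truncatedError_le_one [Nonempty V] (P : Finpartition (univ : Finset V))
    {f : V → V → ℝ} (hf : ∀ x y, 0 ≤ f x y) : cutNorm (truncatedError P f) ≤ 1 :=
  cutNorm_le_iff.2 fun A B => (one_mul ((Fintype.card V : ℝ) ^ 2)).symm ▸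
    abs_sum_truncatedError_le P hf A B

lemma sum_mem_eq_sum_mul_indicator (S : Finset (V × V)) (F : V → V → ℝ) :
    ∑ z ∈ S, F z.1 z.2 = ∑ x, ∑ y, F x y * (if (x, y) ∈ S then 1 else 0) := by
  simp_rw [mul_ite, mul_one, mul_zero]
  rw [← Fintype.sum_prod_type' (fun x y => if (x, y) ∈ S then F x y else 0), sum_ite_mem,
    univ_inter]

lemma sum_truncatedError_eq (hQP : Q ≤ P) (f : V → V → ℝ) {A B : Finset V}
    (hA : ∀ ⦃x x'⦄, Q.part x = Q.part x' → (x ∈ A ↔ x' ∈ A))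
    (hB : ∀ ⦃y y'⦄, Q.part y = Q.part y' → (y ∈ B ↔ y' ∈ B)) :
    ∑ x ∈ A, ∑ y ∈ B, truncatedError P f x y =
      ∑ z ∈ (A ×ˢ B).filter (fun z => stepFn P f z.1 z.2 ≤ 1),
        (stepFn Q f z.1 z.2 - stepFn P f z.1 z.2) := by
  set S := (A ×ˢ B).filter (fun z => stepFn P f z.1 z.2 ≤ 1)
  have hS : BlockConst Q fun x y => if (x, y) ∈ S then 1 else 0 := fun x x' y y' hx hy => by
    simp only [S, mem_filter, mem_product, hA hx, hB hy,
      blockConst_stepFn P f (part_eq_part_of_le hQP hx) (part_eq_part_of_le hQP hy)]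
  calc ∑ x ∈ A, ∑ y ∈ B, truncatedError P f x y
      = ∑ z ∈ S, (f z.1 z.2 - stepFn P f z.1 z.2) := by
        simp only [S, sum_filter, sum_product, truncatedError, mul_ite, mul_one, mul_zero]
    _ = ∑ x, ∑ y, (f x y - stepFn P f x y) * (if (x, y) ∈ S then 1 else 0) :=
        sum_mem_eq_sum_mul_indicator S fun x y => f x y - stepFn P f x y
    _ = ∑ x, ∑ y, (stepFn Q f x y - stepFn P f x y) * (if (x, y) ∈ S then 1 else 0) := by
        simp_rw [sub_mul, sum_sub_distrib, sum_stepFn_mul_of_blockConst hS]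
    _ = _ := (sum_mem_eq_sum_mul_indicator S fun x y => stepFn Q f x y - stepFn P f x y).symm

lemma exists_refinement_energy_gain [Nonempty V] (P : Finpartition (univ : Finset V))
    (f : V → V → ℝ) {ε : ℝ} (hε₀ : 0 ≤ ε) (hε₁ : ε ≤ 1)
    (hcut : ¬ cutNorm (truncatedError P f) ≤ ε) :
    ∃ Q : Finpartition (univ : Finset V), #Q.parts ≤ 4 * #P.parts ∧
      energy P f + ε ^ 2 * (Fintype.card V : ℝ) ^ 2 / 2 ≤ energy Q f := by
  simp only [cutNorm_le_iff, not_forall, not_le] at hcut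
  obtain ⟨A, B, hAB⟩ := hcut
  set R := Finpartition.atomise univ {A, B}
  refine ⟨P ⊓ R, ?_, ?_⟩
  · calc #(P ⊓ R).parts ≤ #P.parts * 2 ^ #{A, B} :=
          (card_parts_inf_le P R).trans (Nat.mul_le_mul_left _ Finpartition.card_atomise_le)
      _ ≤ 4 * #P.parts := by
          rw [mul_comm]
          exact Nat.mul_le_mul_right _ (Nat.pow_le_pow_right two_pos card_le_two)
  · have hR : P ⊓ R ≤ R := inf_le_right
    rw [sum_truncatedError_eq inf_le_left f
      (fun _ _ h => mem_iff_mem_of_le_atomise hR (by simp) h)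
      (fun _ _ h => mem_iff_mem_of_le_atomise hR (by simp) h)] at hAB
    have hgain := sq_mul_card_div_two_le_sum_bregman
      (fun z : V × V => stepFn (P ⊓ R) f z.1 z.2) (fun z => stepFn P f z.1 z.2) _
      (fun z hz => (mem_filter.1 hz).2) hε₀ hε₁ (by rwa [Fintype.card_prod, Nat.cast_mul, ← sq])
    rw [Fintype.card_prod, Nat.cast_mul, ← sq, Fintype.sum_prod_type,
      ← energy_sub_energy_of_le inf_le_left] at hgain
    linarith

lemma exists_cutNorm_truncatedError_le [Nonempty V] (P : Finpartition (univ : Finset V))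
    {f : V → V → ℝ} (hf : ∀ x y, 0 ≤ f x y) {ε : ℝ} (hε₀ : 0 < ε) (hε₁ : ε ≤ 1) :
    ∃ Q : Finpartition (univ : Finset V),
      #Q.parts ≤ 4 ^ ⌊12 * ((∑ x, ∑ y, f x y) / (Fintype.card V : ℝ) ^ 2) / ε ^ 2⌋₊ * #P.parts ∧
      cutNorm (truncatedError Q f) ≤ ε := by
  set n : ℝ := (Fintype.card V : ℝ)
  set d := (∑ x, ∑ y, f x y) / n ^ 2
  have hn : 0 < n ^ 2 := by positivity
  have hsum : ∑ x, ∑ y, f x y = d * n ^ 2 := (div_mul_cancel₀ _ hn.ne').symm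
  have hgap : 6 * (d * n ^ 2) = 12 * d / ε ^ 2 * (ε ^ 2 * n ^ 2 / 2) := by
    field_simp
    ring
  have hsteps := mul_lt_mul_of_pos_right (Nat.lt_floor_add_one (12 * d / ε ^ 2))
    (by positivity : 0 < ε ^ 2 * n ^ 2 / 2)
  exact exists_of_energy_increment (good := fun P => cutNorm (truncatedError P f) ≤ ε)
    (by norm_num) (fun P => energy_le P hf)
    (fun P hP => exists_refinement_energy_gain P f hε₀.le hε₁ hP) ⌊12 * d / ε ^ 2⌋₊ P
    (by linarith [energy_nonneg P f])

end Partition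

end SparseRegularity

open SparseRegularity in
theorem sparse_weak_regularity_general {V : Type*} [DecidableEq V] [Fintype V] [Nonempty V]
    (ε : ℝ) (hε : 0 < ε) (f : V → V → ℝ)
    (hnn : ∀ x y, 0 ≤ f x y) :
    ∃ P : Finpartition (Finset.univ : Finset V),
      (P.parts.card : ℝ) ≤
        2 ^ (32 * ((∑ x, ∑ y, f x y) / ((Fintype.card V : ℝ)) ^ 2) / ε ^ 2) ∧
      cutNorm (fun x y =>
        (f x y - stepFn P f x y) * (if stepFn P f x y ≤ 1 then 1 else 0)) ≤ ε := by
  let P₀ := Finpartition.indiscrete (univ_nonempty (α := V)).ne_empty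
  have hP₀ : #P₀.parts = 1 := card_singleton _
  set d := (∑ x, ∑ y, f x y) / (Fintype.card V : ℝ) ^ 2 with hd_def
  have hd : 0 ≤ d := div_nonneg (sum_nonneg fun x _ => sum_nonneg fun y _ => hnn x y) (sq_nonneg _)
  rcases le_or_gt 1 ε with hε₁ | hε₁
  · refine ⟨P₀, ?_, (cutNorm_truncatedError_le_one P₀ hnn).trans hε₁⟩
    rw [hP₀, Nat.cast_one]
    exact Real.one_le_rpow one_le_two (by positivity)
  · obtain ⟨Q, hcard, hQ⟩ := exists_cutNorm_truncatedError_le P₀ hnn hε hε₁.le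
    refine ⟨Q, ?_, hQ⟩
    rw [hP₀, mul_one, ← hd_def] at hcard
    calc (#Q.parts : ℝ) ≤ 4 ^ ⌊12 * d / ε ^ 2⌋₊ := (Nat.cast_le.2 hcard).trans_eq (by norm_cast)
      _ ≤ 2 ^ (2 * (12 * d / ε ^ 2)) := four_pow_floor_le_two_rpow (by positivity)
      _ ≤ 2 ^ (32 * d / ε ^ 2) := Real.rpow_le_rpow_of_exponent_le one_le_two <| by
          rw [mul_div_assoc']
          exact div_le_div_of_nonneg_right (by linarith) (by positivity)

/-- **Sparse weak regularity lemma.** For every `ε > 0` and every symmetric nonnegative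
`f : V × V → [0,∞)` there exists a partition `𝒫` of `V` into at most `2^{32·E[f]/ε²}` parts
with `‖(f − f_𝒫)·1_{f_𝒫 ≤ 1}‖_□ ≤ ε`. -/
theorem sparse_weak_regularity {V : Type*} [DecidableEq V] [Fintype V] [Nonempty V]
    (ε : ℝ) (hε : 0 < ε) (f : V → V → ℝ)
    (hsymm : ∀ x y, f x y = f y x) (hnn : ∀ x y, 0 ≤ f x y) :
    ∃ P : Finpartition (Finset.univ : Finset V),
      (P.parts.card : ℝ) ≤
        2 ^ (32 * ((∑ x, ∑ y, f x y) / ((Fintype.card V : ℝ)) ^ 2) / ε ^ 2) ∧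
      cutNorm (fun x y =>
        (f x y - stepFn P f x y) * (if stepFn P f x y ≤ 1 then 1 else 0)) ≤ ε :=
  sparse_weak_regularity_general ε hε f hnn
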